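/- Let (T_i, T_j) be a centered bivariate normal random vector with unit variances and correlation ρ ∈ (0,1), let α ∈ (0,1), let c = c_{α/2} be the upper α/2 quantile of the standard normal distribution, and set R_i = {|T_i| > c}, R_j = {|T_j| > c}. Then Cov(1_{R_i}, 1_{R_j}) > 0, i.e. P(R_i ∩ R_j) > α². -/

import Mathlib

open MeasureTheory ProbabilityTheory

/-- The standard normal cumulative distribution function `Φ`. -/
noncomputable def stdCDF (x : ℝ) : ℝ :=
  ∫ t in Set.Iic x, (Real.sqrt (2 * Real.pi))⁻¹ * Real.exp (-t ^ 2 / 2)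

/-- The standard bivariate normal distribution with correlation `ρ`, as a measure on `ℝ × ℝ`
given by its density with respect to Lebesgue measure. -/
noncomputable def bivNormal (ρ : ℝ) : Measure (ℝ × ℝ) :=
  volume.withDensity fun p =>
    ENNReal.ofReal ((2 * Real.pi * Real.sqrt (1 - ρ ^ 2))⁻¹ *
      Real.exp (-(p.1 ^ 2 - 2 * ρ * p.1 * p.2 + p.2 ^ 2) / (2 * (1 - ρ ^ 2))))


/-!
Conditionally on `Tᵢ = x`, `Tⱼ` is normal with mean `ρ x` and variance `1 - ρ²`, so with
`A = {y | c < |y|}` and `g x = P(|N(ρ x, 1 - ρ²)| > c)` we get `P(Rᵢ ∩ Rⱼ) = E[1_A(Tᵢ) g(Tᵢ)]`,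
while `E[g(Tᵢ)] = P(Rⱼ) = α = P(Tᵢ ∈ A)`. Moving the mean of a normal law away from `0` pushes
mass out of `[-c, c]`, so `g` is a strictly increasing function of `|x|`. Hence `1_A - α` and
`g - g c` have the same sign everywhere, and `Cov(1_A(Tᵢ), g(Tᵢ)) > 0`.
-/

open Real Set NNReal

lemma measureReal_mul_integral_lt_setIntegral {X : Type*} [MeasurableSpace X] {μ : Measure X}
    [IsProbabilityMeasure μ] {s : Set X} (hs : MeasurableSet s) {g : X → ℝ}
    (hg : Integrable g μ) {t : ℝ} (hlt : ∀ x ∈ s, t < g x) (hle : ∀ x ∉ s, g x ≤ t)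
    (hs₀ : 0 < μ.real s) (hs₁ : μ.real s < 1) :
    μ.real s * ∫ x, g x ∂μ < ∫ x in s, g x ∂μ := by
  have hin : 0 < ∫ x in s, (g x - t) ∂μ := by
    rw [setIntegral_pos_iff_support_of_nonneg_ae
      ((ae_restrict_iff' hs).2 (ae_of_all _ fun x hx => (sub_pos.2 (hlt x hx)).le))
      (hg.sub (integrable_const t)).integrableOn,
      inter_eq_right.2 fun x hx => Function.mem_support.2 (sub_pos.2 (hlt x hx)).ne']
    exact (ENNReal.toReal_pos_iff.1 hs₀).1
  have hout : 0 ≤ ∫ x in sᶜ, (t - g x) ∂μ :=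
    setIntegral_nonneg hs.compl fun x hx => sub_nonneg.2 (hle x hx)
  rw [integral_sub hg.integrableOn (integrable_const t).integrableOn, setIntegral_const,
    smul_eq_mul] at hin
  rw [integral_sub (integrable_const t).integrableOn hg.integrableOn, setIntegral_const,
    smul_eq_mul, probReal_compl_eq_one_sub hs] at hout
  rw [← integral_add_compl hs hg]
  -- `∫_s g - μ s ∫ g = (1 - μ s) ∫_s (g - t) + μ s ∫_sᶜ (t - g)`
  nlinarith [mul_pos (sub_pos.2 hs₁) hin, mul_nonneg hs₀.le hout]

lemma stdCDF_eq_integral_gaussianPDFReal (x : ℝ) :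
    stdCDF x = ∫ t in Iic x, gaussianPDFReal 0 1 t := by
  simp [stdCDF, gaussianPDFReal]

lemma stdCDF_eq_measureReal (x : ℝ) : stdCDF x = (gaussianReal 0 1).real (Iic x) := by
  rw [measureReal_def, gaussianReal_apply_eq_integral _ one_ne_zero, ENNReal.toReal_ofReal
    (setIntegral_nonneg measurableSet_Iic fun t _ => gaussianPDFReal_nonneg _ _ _),
    stdCDF_eq_integral_gaussianPDFReal]

lemma stdCDF_mono : Monotone stdCDF := fun a b hab => by
  simp only [stdCDF_eq_measureReal]
  exact measureReal_mono (Iic_subset_Iic.2 hab)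

lemma stdCDF_neg (x : ℝ) : stdCDF (-x) = 1 - stdCDF x := by
  have hsymm : (gaussianReal 0 1).map (fun z => -z) = gaussianReal 0 1 := by
    rw [gaussianReal_map_neg, neg_zero]
  have := nullSingletonClass_gaussianReal (μ := 0) one_ne_zero
  simp only [stdCDF_eq_measureReal]
  calc (gaussianReal 0 1).real (Iic (-x))
      = ((gaussianReal 0 1).map (fun z => -z)).real (Iic (-x)) := by rw [hsymm]
    _ = (gaussianReal 0 1).real (Ici x) := by
      rw [map_measureReal_apply measurable_neg measurableSet_Iic]
      congr 1
      ext z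
      simp
    _ = (gaussianReal 0 1).real (Ioi x) := measureReal_congr Ioi_ae_eq_Ici.symm
    _ = 1 - (gaussianReal 0 1).real (Iic x) := by
      rw [← compl_Iic, probReal_compl_eq_one_sub measurableSet_Iic]

lemma stdCDF_zero : stdCDF 0 = 1 / 2 := by
  have := stdCDF_neg 0
  rw [neg_zero] at this
  linarith

lemma stdCDF_sub_stdCDF (a b : ℝ) :
    stdCDF b - stdCDF a = ∫ t in a..b, gaussianPDFReal 0 1 t := by
  simp only [stdCDF_eq_integral_gaussianPDFReal]
  exact intervalIntegral.integral_Iic_sub_Iic (integrable_gaussianPDFReal 0 1).integrableOn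
    (integrable_gaussianPDFReal 0 1).integrableOn

lemma stdCDF_sub_shift_lt {a b d : ℝ} (hd : 0 < d) (hab : a < b) (hb : b ≤ d / 2) :
    stdCDF (b - d) - stdCDF (a - d) < stdCDF b - stdCDF a := by
  have hpdf : ∀ t ∈ Ioo a b, gaussianPDFReal 0 1 (t - d) < gaussianPDFReal 0 1 t := by
    intro t ht
    have : t ^ 2 < (t - d) ^ 2 := by nlinarith [ht.2]
    simp only [gaussianPDFReal, NNReal.coe_one, sub_zero]
    exact mul_lt_mul_of_pos_left (exp_lt_exp.2 (by linarith)) (by positivity)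
  have hint := integrable_gaussianPDFReal 0 1
  have hpos := intervalIntegral.intervalIntegral_pos_of_pos_on
    (f := fun t => gaussianPDFReal 0 1 t - gaussianPDFReal 0 1 (t - d))
    ((hint.sub (hint.comp_sub_right d)).intervalIntegrable) (fun t ht => sub_pos.2 (hpdf t ht)) hab
  rw [intervalIntegral.integral_sub hint.intervalIntegrable
    (hint.comp_sub_right d).intervalIntegrable, intervalIntegral.integral_comp_sub_right] at hpos
  rw [stdCDF_sub_stdCDF, stdCDF_sub_stdCDF]
  linarith

lemma gaussianReal_eq_map_affine (m : ℝ) (v : ℝ≥0) :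
    gaussianReal m v = (gaussianReal 0 1).map (fun z => √v * z + m) := by
  have h : (gaussianReal 0 1).map (√v * ·) = gaussianReal 0 v := by
    rw [gaussianReal_map_const_mul]
    congr 1
    · simp
    · ext; simp
  rw [show (fun z => √v * z + m) = (· + m) ∘ (√v * ·) from rfl,
    ← Measure.map_map (by fun_prop) (by fun_prop), h, gaussianReal_map_add_const, zero_add]

lemma gaussianReal_real_Iic (m : ℝ) {v : ℝ≥0} (hv : v ≠ 0) (u : ℝ) :
    (gaussianReal m v).real (Iic u) = stdCDF ((u - m) / √v) := by
  have hs : 0 < √(v : ℝ) := Real.sqrt_pos.2 (NNReal.coe_pos.2 (pos_iff_ne_zero.2 hv))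
  rw [gaussianReal_eq_map_affine, map_measureReal_apply (by fun_prop) measurableSet_Iic,
    stdCDF_eq_measureReal]
  congr 1
  ext z
  simp only [mem_preimage, mem_Iic, le_div_iff₀ hs]
  constructor <;> intro <;> linarith

lemma measurableSet_abs_gt (c : ℝ) : MeasurableSet {y : ℝ | c < |y|} :=
  measurableSet_lt measurable_const measurable_abs

lemma gaussianReal_real_abs_gt (m : ℝ) {v : ℝ≥0} (hv : v ≠ 0) {c : ℝ} (hc : 0 ≤ c) :
    (gaussianReal m v).real {y | c < |y|}
      = 1 - stdCDF ((c - m) / √v) + stdCDF ((-c - m) / √v) := by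
  have := nullSingletonClass_gaussianReal (μ := m) hv
  have hsplit : {y : ℝ | c < |y|} = Iio (-c) ∪ Ioi c := by
    ext y
    simp only [mem_ofPred_eq, mem_union, mem_Iio, mem_Ioi, lt_abs, lt_neg]
    tauto
  rw [hsplit, measureReal_union (Iio_disjoint_Ioi_of_le (by linarith)) measurableSet_Ioi,
    measureReal_congr Iio_ae_eq_Iic, ← compl_Iic, probReal_compl_eq_one_sub measurableSet_Iic,
    gaussianReal_real_Iic m hv, gaussianReal_real_Iic m hv]
  ring

lemma gaussianReal_zero_one_real_abs_gt {c : ℝ} (hc : 0 ≤ c) :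
    (gaussianReal 0 1).real {y | c < |y|} = 2 * (1 - stdCDF c) := by
  rw [gaussianReal_real_abs_gt 0 one_ne_zero hc]
  simp only [sub_zero, NNReal.coe_one, Real.sqrt_one, div_one, stdCDF_neg]
  ring

lemma gaussianReal_abs_real_abs_gt (m : ℝ) (v : ℝ≥0) (c : ℝ) :
    (gaussianReal |m| v).real {y | c < |y|} = (gaussianReal m v).real {y | c < |y|} := by
  rcases abs_choice m with h | h
  · rw [h]
  · rw [h, ← gaussianReal_map_neg, map_measureReal_apply measurable_neg (measurableSet_abs_gt c)]
    congr 1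
    ext y
    simp

lemma strictMonoOn_gaussianReal_real_abs_gt {v : ℝ≥0} (hv : v ≠ 0) {c : ℝ} (hc : 0 < c) :
    StrictMonoOn (fun m => (gaussianReal m v).real {y | c < |y|}) (Ici 0) := by
  intro m₁ hm₁ m₂ _ hm
  have hs : 0 < √(v : ℝ) := Real.sqrt_pos.2 (NNReal.coe_pos.2 (pos_iff_ne_zero.2 hv))
  have hshift := stdCDF_sub_shift_lt (a := (c - m₂) / √v) (b := (c - m₁) / √v)
    (d := 2 * c / √v) (by positivity) (div_lt_div_of_pos_right (by linarith) hs)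
    (by
      rw [show 2 * c / √v / 2 = c / √v by ring]
      exact div_le_div_of_nonneg_right (by linarith [mem_Ici.1 hm₁]) hs.le)
  simp only [gaussianReal_real_abs_gt _ hv hc.le]
  rw [show (-c - m₁) / √v = (c - m₁) / √v - 2 * c / √v by ring,
    show (-c - m₂) / √v = (c - m₂) / √v - 2 * c / √v by ring]
  linarith

lemma gaussianReal_real_abs_gt_lt_iff {v : ℝ≥0} (hv : v ≠ 0) {c : ℝ} (hc : 0 < c)
    {m₁ m₂ : ℝ} :
    (gaussianReal m₁ v).real {y | c < |y|} < (gaussianReal m₂ v).real {y | c < |y|}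
      ↔ |m₁| < |m₂| := by
  rw [← gaussianReal_abs_real_abs_gt m₁, ← gaussianReal_abs_real_abs_gt m₂]
  exact (strictMonoOn_gaussianReal_real_abs_gt hv hc).lt_iff_lt (mem_Ici.2 (abs_nonneg _))
    (mem_Ici.2 (abs_nonneg _))

lemma measurable_gaussianReal_mul_apply (ρ : ℝ) (v : ℝ≥0) {t : Set ℝ} (ht : MeasurableSet t) :
    Measurable fun x => gaussianReal (ρ * x) v t :=
  (Measure.measurable_coe ht).comp
    (measurable_gaussianReal.comp ((measurable_const_mul ρ).prodMk measurable_const))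

lemma integrable_gaussianReal_mul_real {μ : Measure ℝ} [IsFiniteMeasure μ] (ρ : ℝ) (v : ℝ≥0)
    {t : Set ℝ} (ht : MeasurableSet t) :
    Integrable (fun x => (gaussianReal (ρ * x) v).real t) μ :=
  .of_bound (measurable_gaussianReal_mul_apply ρ v ht).ennreal_toReal.aestronglyMeasurable 1
    (ae_of_all _ fun _ => by
      rw [Real.norm_of_nonneg measureReal_nonneg]
      exact measureReal_le_one)

def bivNormalCondVar (ρ : ℝ) : ℝ≥0 := (1 - ρ ^ 2).toNNReal

section BivariateNormal

variable {ρ : ℝ}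

lemma bivNormalCondVar_ne_zero (hρ : |ρ| < 1) : bivNormalCondVar ρ ≠ 0 := by
  have : ρ ^ 2 < 1 := by rwa [sq_lt_one_iff_abs_lt_one]
  simpa [bivNormalCondVar] using this

lemma bivNormal_eq_withDensity (hρ : |ρ| < 1) :
    bivNormal ρ = volume.withDensity
      fun p => gaussianPDF 0 1 p.1 * gaussianPDF (ρ * p.1) (bivNormalCondVar ρ) p.2 := by
  have h1 : 0 < 1 - ρ ^ 2 := by nlinarith [abs_lt.1 hρ]
  have hv : (bivNormalCondVar ρ : ℝ) = 1 - ρ ^ 2 := Real.coe_toNNReal _ h1.le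
  unfold bivNormal
  congr 1
  funext p
  rw [gaussianPDF, gaussianPDF, ← ENNReal.ofReal_mul (gaussianPDFReal_nonneg _ _ _)]
  congr 1
  simp only [gaussianPDFReal, hv, NNReal.coe_one, sub_zero, mul_one]
  have hexp : -(p.1 ^ 2 - 2 * ρ * p.1 * p.2 + p.2 ^ 2) / (2 * (1 - ρ ^ 2))
      = -p.1 ^ 2 / 2 + -(p.2 - ρ * p.1) ^ 2 / (2 * (1 - ρ ^ 2)) := by
    field_simp
    ring
  have hsqrt : √(2 * π * (1 - ρ ^ 2)) = √(2 * π) * √(1 - ρ ^ 2) :=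
    Real.sqrt_mul (by positivity) _
  rw [hexp, exp_add, hsqrt]
  field_simp
  exact Real.sq_sqrt (by positivity)

lemma bivNormal_prod (hρ : |ρ| < 1) {s t : Set ℝ} (hs : MeasurableSet s) (ht : MeasurableSet t) :
    bivNormal ρ (s ×ˢ t)
      = ∫⁻ x in s, gaussianReal (ρ * x) (bivNormalCondVar ρ) t ∂gaussianReal 0 1 := by
  rw [bivNormal_eq_withDensity hρ, withDensity_apply _ (hs.prod ht), Measure.volume_eq_prod,
    setLIntegral_prod _ (by fun_prop), gaussianReal_of_var_ne_zero 0 one_ne_zero,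
    setLIntegral_withDensity_eq_setLIntegral_mul _ (measurable_gaussianPDF 0 1)
      (measurable_gaussianReal_mul_apply ρ _ ht) hs]
  refine setLIntegral_congr_fun hs fun x _ => ?_
  dsimp only [Pi.mul_apply]
  rw [lintegral_const_mul _ (measurable_gaussianPDF _ _),
    gaussianReal_apply _ (bivNormalCondVar_ne_zero hρ)]

lemma bivNormal_real_prod (hρ : |ρ| < 1) {s t : Set ℝ} (hs : MeasurableSet s)
    (ht : MeasurableSet t) :
    (bivNormal ρ).real (s ×ˢ t)
      = ∫ x in s, (gaussianReal (ρ * x) (bivNormalCondVar ρ)).real t ∂gaussianReal 0 1 := by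
  rw [measureReal_def, bivNormal_prod hρ hs ht, ← integral_toReal
    (measurable_gaussianReal_mul_apply ρ _ ht).aemeasurable
    (ae_of_all _ fun _ => measure_lt_top _ _)]
  rfl

lemma isProbabilityMeasure_bivNormal (hρ : |ρ| < 1) : IsProbabilityMeasure (bivNormal ρ) :=
  ⟨by simp [← univ_prod_univ, bivNormal_prod hρ .univ .univ]⟩

variable (ρ) in
lemma bivNormal_prod_comm {s t : Set ℝ} (hs : MeasurableSet s) (ht : MeasurableSet t) :
    bivNormal ρ (s ×ˢ t) = bivNormal ρ (t ×ˢ s) := by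
  rw [bivNormal, withDensity_apply _ (hs.prod ht), withDensity_apply _ (ht.prod hs),
    Measure.volume_eq_prod, setLIntegral_prod_symm _ (by fun_prop),
    setLIntegral_prod _ (by fun_prop)]
  refine lintegral_congr fun y => lintegral_congr fun x => ?_
  ring_nf

lemma integral_gaussianReal_mul_real (hρ : |ρ| < 1) {t : Set ℝ} (ht : MeasurableSet t) :
    ∫ x, (gaussianReal (ρ * x) (bivNormalCondVar ρ)).real t ∂gaussianReal 0 1
      = (gaussianReal 0 1).real t := by
  rw [← setIntegral_univ, ← bivNormal_real_prod hρ .univ ht, measureReal_def,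
    bivNormal_prod_comm ρ .univ ht, ← measureReal_def, bivNormal_real_prod hρ ht .univ]
  simp

end BivariateNormal

lemma measure_preimage_inter_preimage_of_map_eq {Ω α β : Type*} [MeasurableSpace Ω]
    [MeasurableSpace α] [MeasurableSpace β] {P : Measure Ω} {X : Ω → α} {Y : Ω → β}
    {ν : Measure (α × β)} (hlaw : P.map (fun ω => (X ω, Y ω)) = ν) (hν : ν ≠ 0)
    {s : Set α} {t : Set β} (hs : MeasurableSet s) (ht : MeasurableSet t) :
    P (X ⁻¹' s ∩ Y ⁻¹' t) = ν (s ×ˢ t) := by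
  rw [← hlaw, Measure.map_apply_of_aemeasurable (.of_map_ne_zero (hlaw ▸ hν)) (hs.prod ht)]
  rfl

theorem statement5_general
    {Ω : Type*} [MeasurableSpace Ω] (P : Measure Ω)
    (Ti Tj : Ω → ℝ)
    (ρ : ℝ) (hρ : ρ ∈ Set.Ioo (0 : ℝ) 1)
    (hlaw : P.map (fun ω => (Ti ω, Tj ω)) = bivNormal ρ)
    (α : ℝ) (hα : α ∈ Set.Ioo (0 : ℝ) 1)
    (c : ℝ) (hc : 2 * (1 - stdCDF c) = α) :
    α ^ 2 < (P ({ω | c < |Ti ω|} ∩ {ω | c < |Tj ω|})).toReal := by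
  have hρ' : |ρ| < 1 := abs_lt.2 ⟨by linarith [hρ.1], hρ.2⟩
  have hc₀ : 0 < c := by
    by_contra! h
    linarith [stdCDF_mono h, stdCDF_zero, hα.2]
  set A := {y : ℝ | c < |y|}
  have hA := measurableSet_abs_gt c
  set g := fun x => (gaussianReal (ρ * x) (bivNormalCondVar ρ)).real A
  have hαA : (gaussianReal 0 1).real A = α := by rw [gaussianReal_zero_one_real_abs_gt hc₀.le, hc]
  have hP : P ({ω | c < |Ti ω|} ∩ {ω | c < |Tj ω|}) = bivNormal ρ (A ×ˢ A) :=
    measure_preimage_inter_preimage_of_map_eq hlaw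
      (isProbabilityMeasure_bivNormal hρ').ne_zero hA hA
  have habs : ∀ x, |ρ * x| = ρ * |x| := fun x => by rw [abs_mul, abs_of_pos hρ.1]
  have hg_iff : ∀ x y, g x < g y ↔ |ρ * x| < |ρ * y| := fun _ _ =>
    gaussianReal_real_abs_gt_lt_iff (bivNormalCondVar_ne_zero hρ') hc₀
  have hlt : ∀ x ∈ A, g c < g x := fun x hx => (hg_iff c x).2 <| by
    rw [habs, habs, abs_of_pos hc₀]
    exact mul_lt_mul_of_pos_left hx hρ.1
  have hle : ∀ x ∉ A, g x ≤ g c := fun x hx => not_lt.1 fun h => hx <| by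
    rw [hg_iff, habs, habs, abs_of_pos hc₀] at h
    exact lt_of_mul_lt_mul_left h hρ.1.le
  rw [hP, ← measureReal_def, bivNormal_real_prod hρ' hA hA, sq]
  calc α * α = (gaussianReal 0 1).real A * ∫ x, g x ∂gaussianReal 0 1 := by
        rw [integral_gaussianReal_mul_real hρ' hA, hαA]
    _ < ∫ x in A, g x ∂gaussianReal 0 1 :=
      measureReal_mul_integral_lt_setIntegral hA (integrable_gaussianReal_mul_real ρ _ hA)
        hlt hle (hαA ▸ hα.1) (hαA ▸ hα.2)

/-- If `(Tᵢ, Tⱼ)` is standard bivariate normal with correlation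
`ρ ∈ (0, 1)`, `α ∈ (0,1)`, `c = c_{α/2}` the upper `α/2` standard normal quantile, and
`Rᵢ = {|Tᵢ| > c}`, `Rⱼ = {|Tⱼ| > c}`, then `Cov(1_{Rᵢ}, 1_{Rⱼ}) > 0`, i.e.
`P(Rᵢ ∩ Rⱼ) > α²`. -/
theorem statement5
    {Ω : Type*} [MeasurableSpace Ω] (P : Measure Ω) [IsProbabilityMeasure P]
    (Ti Tj : Ω → ℝ) (hTi : Measurable Ti) (hTj : Measurable Tj)
    (ρ : ℝ) (hρ : ρ ∈ Set.Ioo (0 : ℝ) 1)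
    (hlaw : P.map (fun ω => (Ti ω, Tj ω)) = bivNormal ρ)
    (α : ℝ) (hα : α ∈ Set.Ioo (0 : ℝ) 1)
    (c : ℝ) (hc : 2 * (1 - stdCDF c) = α) :
    α ^ 2 < (P ({ω | c < |Ti ω|} ∩ {ω | c < |Tj ω|})).toReal :=
  statement5_general P Ti Tj ρ hρ hlaw α hα c hc
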